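/- For every n ≥ 2, sl(n) = sf(n) + dsf(n). -/

import Mathlib

def sf : ℕ → ℕ
  | 0 => 1
  | 1 => 1
  | n + 2 => if (n + 2) % 2 = 0 then sf ((n + 2) / 2) else sf (n + 1) + sf n
decreasing_by all_goals omega

def dsf : ℕ → ℕ
  | 0 => 0
  | 1 => 0
  | 2 => 0
  | 3 => 1
  | n + 4 => if (n + 4) % 2 = 0 then dsf ((n + 4) / 2) else dsf (n + 3) + dsf (n + 2)
decreasing_by all_goals omega

def sl : ℕ → ℕ
  | 0 => 0
  | 1 => 2
  | 2 => 1
  | n + 3 => if (n + 3) % 2 = 0 then sl ((n + 3) / 2) else sl (n + 2) + sl (n + 1)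
decreasing_by all_goals omega

lemma sl_even (m : ℕ) (hm : 2 ≤ m) : sl (2 * m) = sl m := by
  obtain ⟨k, rfl⟩ : ∃ k, m = k + 2 := ⟨m - 2, by omega⟩
  have : 2 * (k + 2) = (2 * k + 1) + 3 := by ring
  rw [this, sl]
  have h : (2 * k + 1 + 3) % 2 = 0 := by omega
  simp [h]
  congr 1
  omega

lemma sl_odd (m : ℕ) (hm : 1 ≤ m) : sl (2 * m + 1) = sl (2 * m) + sl (2 * m - 1) := by
  obtain ⟨k, rfl⟩ : ∃ k, m = k + 1 := ⟨m - 1, by omega⟩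
  have : 2 * (k + 1) + 1 = 2 * k + 3 := by ring
  rw [show 2 * (k + 1) - 1 = 2 * k + 1 by omega, show 2 * (k + 1) = 2 * k + 2 by ring,
    show 2 * k + 2 + 1 = 2 * k + 3 by omega, sl]
  have h : ¬ (2 * k + 3) % 2 = 0 := by omega
  simp [h]

lemma sf_even (m : ℕ) (hm : 1 ≤ m) : sf (2 * m) = sf m := by
  obtain ⟨k, rfl⟩ : ∃ k, m = k + 1 := ⟨m - 1, by omega⟩
  have : 2 * (k + 1) = 2 * k + 2 := by ring
  rw [this, sf]
  have h : (2 * k + 2) % 2 = 0 := by omega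
  simp [h]

lemma sf_odd (m : ℕ) (hm : 1 ≤ m) : sf (2 * m + 1) = sf (2 * m) + sf (2 * m - 1) := by
  obtain ⟨k, rfl⟩ : ∃ k, m = k + 1 := ⟨m - 1, by omega⟩
  have : 2 * (k + 1) + 1 = (2 * k + 1) + 2 := by ring
  rw [show 2 * (k + 1) - 1 = 2 * k + 1 by omega, show 2 * (k + 1) = 2 * k + 1 + 1 by ring,
    show 2 * k + 1 + 1 + 1 = 2 * k + 1 + 2 by omega, sf]
  have h : ¬ (2 * k + 1 + 2) % 2 = 0 := by omega
  simp [h]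

lemma dsf_even (m : ℕ) (hm : 2 ≤ m) : dsf (2 * m) = dsf m := by
  obtain ⟨k, rfl⟩ : ∃ k, m = k + 2 := ⟨m - 2, by omega⟩
  have : 2 * (k + 2) = 2 * k + 4 := by ring
  rw [this, dsf]
  have h : (2 * k + 4) % 2 = 0 := by omega
  simp [h]
  congr 1
  omega

lemma dsf_odd (m : ℕ) (hm : 2 ≤ m) : dsf (2 * m + 1) = dsf (2 * m) + dsf (2 * m - 1) := by
  obtain ⟨k, rfl⟩ : ∃ k, m = k + 2 := ⟨m - 2, by omega⟩
  have : 2 * (k + 2) + 1 = (2 * k + 1) + 4 := by ring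
  rw [show 2 * (k + 2) - 1 = 2 * k + 1 + 2 by omega, show 2 * (k + 2) = 2 * k + 1 + 3 by ring,
    show 2 * k + 1 + 3 + 1 = 2 * k + 1 + 4 by omega, dsf]
  have h : ¬ (2 * k + 1 + 4) % 2 = 0 := by omega
  simp [h]

theorem sl_eq_sf_add_dsf (n : ℕ) (hn : 2 ≤ n) : sl n = sf n + dsf n := by
  induction n using Nat.strong_induction_on with
  | _ n ih =>
    match n, hn with
    | 2, _ => simp [sl, sf, dsf]
    | 3, _ => simp [sl, sf, dsf]
    | 4, _ => simp [sl, sf, dsf]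
    | (n + 5), _ =>
      rcases Nat.even_or_odd (n + 5) with ⟨m, hm⟩ | ⟨m, hm⟩
      · have hm2 : 2 ≤ m := by omega
        rw [show n + 5 = 2 * m by omega, sl_even m hm2, sf_even m (by omega),
          dsf_even m hm2]
        exact ih m (by omega) hm2
      · have hm2 : 2 ≤ m := by omega
        rw [show n + 5 = 2 * m + 1 by omega, sl_odd m (by omega), sf_odd m (by omega),
          dsf_odd m hm2]
        have h1 := ih (2 * m) (by omega) (by omega)
        have h2 := ih (2 * m - 1) (by omega) (by omega)
        omega
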